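/- For any nonzero integer a and any integer n ≥ 2, E_{2n,a} ≡ 3a^2 - a - 3a^2 n (mod 9). -/

import Mathlib

open Finset

def EZ (a : ℤ) : ℕ → ℤ
  | 0 => 1
  | n + 1 =>
      -a * ∑ k ∈ (Finset.Icc 1 ((n + 1) / 2)).attach,
        ((n + 1).choose (2 * k.1) : ℤ) * EZ a (n + 1 - 2 * k.1)
  decreasing_by
    have h := Finset.mem_Icc.mp k.2
    omega

/-!
Reflecting the recurrence gives `E (2n+2) = -a ∑_{j ≤ n} C(2n+2, 2j) E (2j)`. By strong induction
`E (2j) ≡ c - d j` with `c = 3a² - a`, `d = 3a²` for `0 < j ≤ n`, so the right-hand side is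
determined by the even-index binomial sums `∑ C(2n+2, 2j) = 2·4ⁿ` and
`∑ j C(2n+2, 2j) = (n+1)·4ⁿ` (both from Pascal's rule and `∑ C(m, i) = 2ᵐ`), and
`4ⁿ = (1+3)ⁿ ≡ 1 + 3n (mod 9)` closes the induction.
-/

theorem Finset.sum_range_two_mul {M : Type*} [AddCommMonoid M] (f : ℕ → M) (n : ℕ) :
    ∑ i ∈ range (2 * n), f i = ∑ k ∈ range n, (f (2 * k) + f (2 * k + 1)) := by
  induction n with
  | zero => simp
  | succ n ih => rw [Nat.mul_succ, sum_range_succ, sum_range_succ, ih, sum_range_succ, add_assoc]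

namespace Nat

theorem sum_range_choose_succ_odd (N n : ℕ) :
    ∑ k ∈ range n, (N + 1).choose (2 * k + 1) = ∑ i ∈ range (2 * n), N.choose i := by
  simp only [choose_succ_succ', sum_range_two_mul]

theorem sum_range_choose_odd_two_mul_add_one (n : ℕ) :
    ∑ k ∈ range (n + 1), (2 * n + 1).choose (2 * k + 1) = 4 ^ n := by
  rw [sum_range_choose_succ_odd, show 2 * (n + 1) = 2 * n + 1 + 1 by ring, sum_range_succ,
    sum_range_choose, choose_succ_self, add_zero, pow_mul]
  norm_num

theorem sum_range_choose_even_two_mul_add_two (n : ℕ) :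
    ∑ k ∈ range (n + 2), (2 * (n + 1)).choose (2 * k) = 2 * 4 ^ n := by
  have total := sum_range_choose (2 * (n + 1))
  have odd : ∑ k ∈ range (n + 1), (2 * (n + 1)).choose (2 * k + 1) = 2 * 4 ^ n := by
    rw [show 2 * (n + 1) = 2 * n + 1 + 1 by ring, sum_range_choose_succ_odd,
      show 2 * (n + 1) = 2 * n + 1 + 1 by ring, sum_range_choose, pow_succ', pow_mul]
    norm_num
  rw [sum_range_succ, sum_range_two_mul, sum_add_distrib, odd, choose_self, pow_mul] at total
  rw [sum_range_succ, choose_self]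
  norm_num [pow_succ] at total
  omega

theorem sum_range_mul_choose_even_two_mul_add_two (n : ℕ) :
    ∑ k ∈ range (n + 2), k * (2 * (n + 1)).choose (2 * k) = (n + 1) * 4 ^ n := by
  have halve (k : ℕ) :
      (k + 1) * (2 * (n + 1)).choose (2 * (k + 1)) = (n + 1) * (2 * n + 1).choose (2 * k + 1) := by
    have := add_one_mul_choose_eq (2 * n + 1) (2 * k + 1)
    rw [show 2 * (n + 1) = 2 * n + 1 + 1 by ring, show 2 * (k + 1) = 2 * k + 1 + 1 by ring]
    linarith
  simp only [sum_range_succ' _ (n + 1), halve, ← mul_sum, sum_range_choose_odd_two_mul_add_one]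
  simp

end Nat

theorem sum_range_choose_even_mul_sub_mul {R : Type*} [CommRing R] (c d : R) (n : ℕ) :
    ∑ j ∈ range (n + 1), ((2 * (n + 1)).choose (2 * j) : R) * (c - d * j) =
      (2 * c - (n + 1) * d) * 4 ^ n - (c - d * (n + 1)) := by
  have hsum : ∑ j ∈ range (n + 2), ((2 * (n + 1)).choose (2 * j) : R) = 2 * 4 ^ n := by
    exact_mod_cast congrArg (Nat.cast : ℕ → R) (Nat.sum_range_choose_even_two_mul_add_two n)
  have hmul :
      ∑ j ∈ range (n + 2), (j : R) * (2 * (n + 1)).choose (2 * j) = (n + 1) * 4 ^ n := by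
    exact_mod_cast
      congrArg (Nat.cast : ℕ → R) (Nat.sum_range_mul_choose_even_two_mul_add_two n)
  rw [eq_sub_iff_add_eq]
  calc _ = ∑ j ∈ range (n + 2), ((2 * (n + 1)).choose (2 * j) : R) * (c - d * j) := by
        rw [sum_range_succ _ (n + 1), Nat.choose_self]
        push_cast
        ring
    _ = c * ∑ j ∈ range (n + 2), ((2 * (n + 1)).choose (2 * j) : R)
          - d * ∑ j ∈ range (n + 2), (j : R) * (2 * (n + 1)).choose (2 * j) := by
        rw [mul_sum, mul_sum, ← sum_sub_distrib]
        exact sum_congr rfl fun j _ => by ring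
    _ = _ := by rw [hsum, hmul]; ring

theorem ZMod.four_pow_eq_one_add_three_mul (n : ℕ) : (4 : ZMod 9) ^ n = 1 + 3 * n := by
  induction n with
  | zero => simp
  | succ n ih =>
    rw [pow_succ, ih]
    have h9 : (9 : ZMod 9) = 0 := rfl
    push_cast
    linear_combination (n : ZMod 9) * h9

theorem EZ_two_mul_succ (a : ℤ) (n : ℕ) :
    EZ a (2 * (n + 1)) =
      -a * ∑ j ∈ range (n + 1), ((2 * (n + 1)).choose (2 * j) : ℤ) * EZ a (2 * j) := by
  rw [show 2 * (n + 1) = 2 * n + 1 + 1 by ring, EZ, show (2 * n + 1 + 1) / 2 = n + 1 by omega,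
    sum_attach (Icc 1 (n + 1))
      (fun k => ((2 * n + 1 + 1).choose (2 * k) : ℤ) * EZ a (2 * n + 1 + 1 - 2 * k))]
  congr 1
  refine sum_nbij' (fun k => n + 1 - k) (fun j => n + 1 - j) ?_ ?_ ?_ ?_ ?_ <;>
    simp only [mem_Icc, mem_range]
  · intro k hk; omega
  · intro j hj; omega
  · intro k hk; omega
  · intro j hj; omega
  · intro k hk
    rw [Nat.choose_symm_of_eq_add (show 2 * n + 1 + 1 = 2 * k + 2 * (n + 1 - k) by omega),
      show 2 * n + 1 + 1 - 2 * k = 2 * (n + 1 - k) by omega]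

theorem EZ_two_mul_succ_zmod (a : ℤ) (n : ℕ) :
    (EZ a (2 * (n + 1)) : ZMod 9) = 3 * a ^ 2 - a - 3 * a ^ 2 * (n + 1) := by
  induction n using Nat.strong_induction_on with
  | _ n ih =>
  -- `E 0 = 1` is the one term not of the form `3a² - a - 3a²j`, hence the correction
  have hrec : (EZ a (2 * (n + 1)) : ZMod 9) = -a * (∑ j ∈ range (n + 1),
      ((2 * (n + 1)).choose (2 * j) : ZMod 9) * (3 * a ^ 2 - a - 3 * a ^ 2 * j)
        + (1 - (3 * a ^ 2 - a))) := by
    rw [EZ_two_mul_succ, sum_range_succ', sum_range_succ', add_assoc]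
    push_cast
    congr 2
    · exact sum_congr rfl fun j hj => by rw [ih j (mem_range.mp hj)]
    · simp [EZ]
  have h9 : (9 : ZMod 9) = 0 := rfl
  rw [hrec, sum_range_choose_even_mul_sub_mul, ZMod.four_pow_eq_one_add_three_mul]
  linear_combination (a ^ 2 * n * (1 - a + a * n)) * h9

theorem stmt19_general (a : ℤ) (n : ℕ) (hn : 2 ≤ n) :
    EZ a (2 * n) ≡ 3 * a ^ 2 - a - 3 * a ^ 2 * n [ZMOD 9] := by
  obtain ⟨m, rfl⟩ : ∃ m, n = m + 1 := ⟨n - 1, by omega⟩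
  refine (ZMod.intCast_eq_intCast_iff _ _ 9).mp ?_
  push_cast
  exact EZ_two_mul_succ_zmod a m

theorem stmt19 (a : ℤ) (ha : a ≠ 0) (n : ℕ) (hn : 2 ≤ n) :
    EZ a (2 * n) ≡ 3 * a ^ 2 - a - 3 * a ^ 2 * n [ZMOD 9] :=
  stmt19_general a n hn
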